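/- arXiv:2303.17898 — 7 statements merged into one kernel-verified Lean document; each statement's English description precedes it below -/
import Mathlib

section
/- The function g(y) = (e^y − 1)^α / y is convex on (0, ∞) for every α ∈ [0, 1]. -/
/-!
On `(0, ∞)` we have `log g(y) = α · (log (eʸ - 1) - log y) + (1 - α) · (-log y)`, a combination
with nonnegative coefficients of two convex functions, so `g` is log-convex and hence convex.
Convexity of `log (eʸ - 1) - log y` is a second-derivative computation, and the sign of the second
derivative reduces to `y² eʸ ≤ (eʸ - 1)²`, i.e. `|t| ≤ |sinh t|` for `t = y / 2`.
-/

open Real Set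

theorem ConvexOn.exp {E : Type*} [AddCommMonoid E] [Module ℝ E] {s : Set E} {f : E → ℝ}
    (hf : ConvexOn ℝ s f) : ConvexOn ℝ s fun x => exp (f x) :=
  ⟨hf.1, fun _ hx _ hy _ _ ha hb hab =>
    (exp_le_exp.2 (hf.2 hx hy ha hb hab)).trans
      (convexOn_exp.2 (mem_univ _) (mem_univ _) ha hb hab)⟩

theorem sq_mul_exp_le_exp_sub_one_sq (y : ℝ) : y ^ 2 * exp y ≤ (exp y - 1) ^ 2 := by
  have hsinh : (y / 2) ^ 2 ≤ sinh (y / 2) ^ 2 := by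
    rw [sq_le_sq, abs_sinh]; exact self_le_sinh_iff.2 (abs_nonneg _)
  have hexp : exp y = exp (y / 2) ^ 2 := by rw [← exp_nat_mul]; ring_nf
  have hfactor : exp y - 1 = 2 * exp (y / 2) * sinh (y / 2) := by
    rw [sinh_eq, hexp, exp_neg]; field_simp
  rw [hfactor, hexp]
  nlinarith [exp_pos (y / 2)]

theorem convexOn_log_exp_sub_one_sub_log :
    ConvexOn ℝ (Ioi 0) fun y => log (exp y - 1) - log y := by
  have he : ∀ y ∈ Ioi (0 : ℝ), 0 < exp y - 1 := fun y hy => sub_pos.2 (one_lt_exp_iff.2 hy)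
  refine convexOn_of_hasDerivWithinAt2_nonneg (convex_Ioi 0)
    (f' := fun y => exp y / (exp y - 1) - y⁻¹)
    (f'' := fun y => (y ^ 2)⁻¹ - exp y / (exp y - 1) ^ 2) ?_ ?_ ?_ ?_
  · exact ((continuous_exp.sub continuous_const).continuousOn.log fun y hy => (he y hy).ne').sub
      (continuousOn_log.mono fun y hy => hy.ne')
  all_goals rw [interior_Ioi]; intro y (hy : 0 < y)
  · exact ((((hasDerivAt_exp y).sub_const 1).log (he y hy).ne').sub
      (hasDerivAt_log hy.ne')).hasDerivWithinAt
  · refine ((((hasDerivAt_exp y).div ((hasDerivAt_exp y).sub_const 1) (he y hy).ne').sub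
      (hasDerivAt_inv hy.ne')).congr_deriv ?_).hasDerivWithinAt
    field_simp
    ring
  · have := he y hy
    rw [sub_nonneg, div_le_iff₀ (by positivity), inv_mul_eq_div, le_div_iff₀ (by positivity)]
    linarith [sq_mul_exp_le_exp_sub_one_sq y]

theorem stmt_1 (α : ℝ) (h0 : 0 ≤ α) (h1 : α ≤ 1) :
    ConvexOn ℝ (Set.Ioi (0 : ℝ)) (fun y => (Real.exp y - 1) ^ α / y) := by
  have hlog : ConvexOn ℝ (Ioi 0) fun y => -log y := strictConcaveOn_log_Ioi.concaveOn.neg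
  refine ((convexOn_log_exp_sub_one_sub_log.smul h0).add
    (hlog.smul (sub_nonneg.2 h1))).exp.congr fun y (hy : 0 < y) => ?_
  have he : 0 < exp y - 1 := sub_pos.2 (one_lt_exp_iff.2 hy)
  simp only [Pi.add_apply, smul_eq_mul]
  rw [rpow_def_of_pos he, div_eq_mul_inv, ← exp_log hy, ← exp_neg, ← exp_add, log_exp]
  ring_nf
end

section
/- For every α ∈ [0,1] and y > 0, the function h(y) = e^{2y}(α²y² − 2αy + 2) − e^y(αy² − 2αy + 4) + 2 is nonnegative. -/
/-!
Write `E = exp y` and `u = E - 1 > 0`. As a polynomial in `α` the expression is the convex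
quadratic `(E y)² α² - E y (2u + y) α + 2u²`. For `y ≥ 1/2` its discriminant is nonpositive,
since `u ≥ y + y²/2 ≥ 5y/4` gives `(2u + y)² ≤ 8u²`. For `y ≤ 1/2` its vertex lies to the right
of `1`, because `E ≥ 1 + y`, so on `α ≤ 1` it is bounded below by its value at `α = 1`, which
factors as `u (E (y² - 2y + 2) - 2) ≥ 0`.
-/

open Real

theorem quadratic_nonneg_of_discrim_nonpos {a b c : ℝ} (ha : 0 < a) (h : discrim a b c ≤ 0)
    (x : ℝ) : 0 ≤ a * (x * x) + b * x + c := by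
  have key : 4 * a * (a * (x * x) + b * x + c) = (2 * a * x + b) ^ 2 - discrim a b c := by
    rw [discrim]; ring
  have : 0 ≤ 4 * a * (a * (x * x) + b * x + c) := by
    rw [key]; nlinarith [sq_nonneg (2 * a * x + b)]
  exact nonneg_of_mul_nonneg_right (by linarith) (by linarith : 0 < 4 * a)

/-- A convex quadratic whose vertex lies right of `1` is decreasing on `(-∞, 1]`. -/
theorem quadratic_nonneg_of_le_one {a b c x : ℝ} (ha : 0 ≤ a) (hab : 2 * a + b ≤ 0)
    (h1 : 0 ≤ a + b + c) (hx : x ≤ 1) : 0 ≤ a * (x * x) + b * x + c := by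
  have hslope : 0 ≤ -b - a * (x + 1) := by nlinarith
  have : a * (x * x) + b * x + c = (a + b + c) + (1 - x) * (-b - a * (x + 1)) := by ring
  rw [this]
  exact add_nonneg h1 (mul_nonneg (by linarith) hslope)

theorem two_le_exp_mul_sq_sub_two_mul_add_two {y : ℝ} (hy : 0 ≤ y) :
    2 ≤ exp y * (y ^ 2 - 2 * y + 2) := by
  have hexp := quadratic_le_exp_of_nonneg hy
  have hpos : 0 ≤ y ^ 2 - 2 * y + 2 := by nlinarith [sq_nonneg (y - 1)]
  calc 2 ≤ (1 + y + y ^ 2 / 2) * (y ^ 2 - 2 * y + 2) := by nlinarith [pow_nonneg hy 4]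
    _ ≤ exp y * (y ^ 2 - 2 * y + 2) := mul_le_mul_of_nonneg_right hexp hpos

theorem stmt_2_general (α y : ℝ) (h1 : α ≤ 1) (hy : 0 < y) :
    0 ≤ Real.exp (2 * y) * (α ^ 2 * y ^ 2 - 2 * α * y + 2)
        - Real.exp y * (α * y ^ 2 - 2 * α * y + 4) + 2 := by
  set E := exp y
  have hE : 0 < E := exp_pos y
  have hquad : exp (2 * y) * (α ^ 2 * y ^ 2 - 2 * α * y + 2) - E * (α * y ^ 2 - 2 * α * y + 4) + 2
      = (E * y) ^ 2 * (α * α) + -(E * y * (2 * (E - 1) + y)) * α + 2 * (E - 1) ^ 2 := by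
    rw [two_mul, exp_add]; ring
  rw [hquad]
  have hEy : 0 < E * y := mul_pos hE hy
  rcases le_total y (1 / 2) with hsmall | hlarge
  · have hvertex : 2 * E * y ≤ 2 * (E - 1) + y := by
      nlinarith [add_one_le_exp y]
    refine quadratic_nonneg_of_le_one (by positivity) ?_ ?_ h1
    · nlinarith
    · have hend := two_le_exp_mul_sq_sub_two_mul_add_two hy.le
      have hu : 0 ≤ E - 1 := by linarith [add_one_le_exp y]
      nlinarith [mul_nonneg hu (sub_nonneg.2 hend)]
  · refine quadratic_nonneg_of_discrim_nonpos (by positivity) ?_ α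
    have hu : 5 / 4 * y ≤ E - 1 := by nlinarith [quadratic_le_exp_of_nonneg hy.le]
    have hsq : (2 * (E - 1) + y) ^ 2 ≤ 8 * (E - 1) ^ 2 := by nlinarith
    rw [discrim]
    nlinarith [mul_le_mul_of_nonneg_left hsq (sq_nonneg (E * y))]

theorem stmt_2 (α y : ℝ) (h0 : 0 ≤ α) (h1 : α ≤ 1) (hy : 0 < y) :
    0 ≤ Real.exp (2 * y) * (α ^ 2 * y ^ 2 - 2 * α * y + 2)
        - Real.exp y * (α * y ^ 2 - 2 * α * y + 4) + 2 :=
  stmt_2_general α y h1 hy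
end

section
/- Fix Z > 0 and α ∈ (0,1). The global minimum of f̃(ρ₀) = ρ₀^α + (e^Z/(1+ρ₀) − 1)^α over [0, e^Z − 1] is attained at one of the three points ρ₀ = 0, ρ₀ = e^Z − 1, or ρ₀ = e^{Z/2} − 1. -/
/-!
Substituting `t = log (1 + ρ₀)` turns `f̃` into `g t = (eᵗ - 1)^α + (e^(Z-t) - 1)^α` on
`[0, Z]`, which is symmetric about `Z / 2`. Since `d/dt (eᵗ - 1)^α = α · exp (m t)` with
`m t = t + (α - 1) log (eᵗ - 1)`, the sign of `g'` is that of `L t = m t - m (Z - t)`.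
`L` vanishes at `Z / 2` and is convex on `(0, Z / 2]`: its derivative is
`2α + (α - 1)(1/(eᵗ - 1) + 1/(e^(Z-t) - 1))`, and the bracket decreases as the split becomes
balanced. So on `(0, Z / 2]` the function `L` is positive and then nonpositive, i.e. `g` rises and
then falls, and its minimum on `[0, Z / 2]` is at `0` or `Z / 2`. Symmetry covers `[Z / 2, Z]`.
-/

open Real Set

noncomputable def splitCost (Z α t : ℝ) : ℝ := (exp t - 1) ^ α + (exp (Z - t) - 1) ^ α

noncomputable def logMarginalCost (α t : ℝ) : ℝ := t + (α - 1) * log (exp t - 1)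

noncomputable def marginalGap (Z α t : ℝ) : ℝ :=
  logMarginalCost α t - logMarginalCost α (Z - t)

lemma exp_sub_one_pos {t : ℝ} (ht : 0 < t) : 0 < exp t - 1 := sub_pos.2 (one_lt_exp_iff.2 ht)

lemma hasDerivAt_rpow_exp_sub_one (α : ℝ) {t : ℝ} (ht : 0 < t) :
    HasDerivAt (fun t => (exp t - 1) ^ α) (α * exp (logMarginalCost α t)) t := by
  have hpos := exp_sub_one_pos ht
  convert ((hasDerivAt_exp t).sub_const 1).rpow_const (p := α) (Or.inl hpos.ne') using 1
  rw [logMarginalCost, exp_add, rpow_def_of_pos hpos, mul_comm (log _)]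
  ring

lemma hasDerivAt_splitCost {Z α t : ℝ} (ht : t ∈ Ioo 0 Z) :
    HasDerivAt (splitCost Z α)
      (α * (exp (logMarginalCost α t) - exp (logMarginalCost α (Z - t)))) t := by
  have hZt : HasDerivAt (fun t : ℝ => Z - t) (-1) t := (hasDerivAt_id t).const_sub Z
  refine ((hasDerivAt_rpow_exp_sub_one α ht.1).add
    ((hasDerivAt_rpow_exp_sub_one α (sub_pos.2 ht.2)).comp t hZt)).congr_deriv ?_
  ring

lemma continuous_splitCost (Z : ℝ) {α : ℝ} (hα : 0 ≤ α) : Continuous (splitCost Z α) :=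
  ((continuous_exp.sub continuous_const).rpow_const fun _ => Or.inr hα).add
    (((continuous_exp.comp (continuous_const.sub continuous_id)).sub continuous_const).rpow_const
      fun _ => Or.inr hα)

lemma splitCost_sub (Z α t : ℝ) : splitCost Z α (Z - t) = splitCost Z α t := by
  rw [splitCost, splitCost, sub_sub_cancel, add_comm]

lemma splitCost_log_one_add (Z α : ℝ) {ρ : ℝ} (hρ : -1 < ρ) :
    splitCost Z α (log (1 + ρ)) = ρ ^ α + (exp Z / (1 + ρ) - 1) ^ α := by
  rw [splitCost, exp_sub, exp_log (by linarith), add_sub_cancel_left]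

lemma hasDerivAt_logMarginalCost (α : ℝ) {t : ℝ} (ht : 0 < t) :
    HasDerivAt (logMarginalCost α) (α + (α - 1) * (exp t - 1)⁻¹) t := by
  have hpos := exp_sub_one_pos ht
  refine ((hasDerivAt_id' t).add ((((hasDerivAt_exp t).sub_const 1).log hpos.ne').const_mul
    (α - 1))).congr_deriv ?_
  field_simp
  ring

lemma hasDerivAt_marginalGap {Z α t : ℝ} (ht : t ∈ Ioo 0 Z) :
    HasDerivAt (marginalGap Z α)
      (2 * α + (α - 1) * ((exp t - 1)⁻¹ + (exp (Z - t) - 1)⁻¹)) t := by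
  have hZt : HasDerivAt (fun t : ℝ => Z - t) (-1) t := (hasDerivAt_id t).const_sub Z
  refine ((hasDerivAt_logMarginalCost α ht.1).sub
    ((hasDerivAt_logMarginalCost α (sub_pos.2 ht.2)).comp t hZt)).congr_deriv ?_
  ring

lemma marginalGap_half (Z α : ℝ) : marginalGap Z α (Z / 2) = 0 := by
  rw [marginalGap, sub_half, sub_self]

lemma antitoneOn_inv_exp_sub_one_add (Z : ℝ) :
    AntitoneOn (fun t => (exp t - 1)⁻¹ + (exp (Z - t) - 1)⁻¹) (Ioc 0 (Z / 2)) := by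
  intro s hs t ht hst
  simp only [exp_sub]
  set a := exp s
  set b := exp t
  set E := exp Z
  have ha : 1 < a := one_lt_exp_iff.2 hs.1
  have hab : a ≤ b := exp_le_exp.2 hst
  have habE : a * b ≤ E := by rw [← exp_add]; exact exp_le_exp.2 (by linarith [hs.2, ht.2])
  have hb : 1 < b := ha.trans_le hab
  have hEa : a < E := by nlinarith
  have hEb : b < E := by nlinarith
  rw [← sub_nonneg]
  have hgap : (a - 1)⁻¹ + (E / a - 1)⁻¹ - ((b - 1)⁻¹ + (E / b - 1)⁻¹)
      = (b - a) * (E - 1) * (E - a * b) / ((a - 1) * (b - 1) * (E - a) * (E - b)) := by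
    rw [div_sub_one (by positivity), div_sub_one (by positivity), inv_div, inv_div]
    have : a - 1 ≠ 0 := by linarith
    have : b - 1 ≠ 0 := by linarith
    have : E - a ≠ 0 := by linarith
    have : E - b ≠ 0 := by linarith
    field_simp
    ring
  rw [hgap]
  apply div_nonneg
  · apply mul_nonneg (mul_nonneg _ _) _ <;> linarith
  · apply mul_nonneg (mul_nonneg (mul_nonneg _ _) _) _ <;> linarith

lemma convexOn_marginalGap (Z : ℝ) {α : ℝ} (hα : α ≤ 1) :
    ConvexOn ℝ (Ioc 0 (Z / 2)) (marginalGap Z α) := by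
  have hderiv : ∀ {t}, t ∈ Ioc 0 (Z / 2) → HasDerivAt (marginalGap Z α)
      (2 * α + (α - 1) * ((exp t - 1)⁻¹ + (exp (Z - t) - 1)⁻¹)) t :=
    fun ht => hasDerivAt_marginalGap ⟨ht.1, by linarith [ht.1, ht.2]⟩
  refine MonotoneOn.convexOn_of_deriv (convex_Ioc _ _)
    (fun t ht => (hderiv ht).continuousAt.continuousWithinAt) ?_ ?_ <;> rw [interior_Ioc]
  · exact fun t ht => (hderiv (Ioo_subset_Ioc_self ht)).differentiableAt.differentiableWithinAt
  · intro s hs t ht hst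
    rw [(hderiv (Ioo_subset_Ioc_self hs)).deriv, (hderiv (Ioo_subset_Ioc_self ht)).deriv]
    have := mul_le_mul_of_nonpos_left
      (antitoneOn_inv_exp_sub_one_add Z (Ioo_subset_Ioc_self hs) (Ioo_subset_Ioc_self ht) hst)
      (sub_nonpos.2 hα)
    linarith

theorem min_le_of_hasDerivAt_of_quasiconvexOn {g g' L : ℝ → ℝ} {a b t : ℝ}
    (hg : ContinuousOn g (Icc a b)) (hg' : ∀ x ∈ Ioo a b, HasDerivAt g (g' x) x)
    (hL : QuasiconvexOn ℝ (Ioc a b) L) (hLb : L b = 0)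
    (hpos : ∀ x ∈ Ioo a b, 0 < L x → 0 ≤ g' x)
    (hneg : ∀ x ∈ Ioo a b, L x ≤ 0 → g' x ≤ 0)
    (ht : t ∈ Icc a b) : min (g a) (g b) ≤ g t := by
  obtain rfl | hat := ht.1.eq_or_lt
  · exact min_le_left _ _
  -- the sublevel set `{L ≤ 0}` is an interval containing `b`
  have hsub : ∀ x ∈ Ioc a b, L x ≤ 0 → Icc x b ⊆ {y ∈ Ioc a b | L y ≤ 0} :=
    fun x hx hLx =>
      (hL 0).ordConnected.out ⟨hx, hLx⟩ ⟨⟨hat.trans_le ht.2, le_rfl⟩, hLb.le⟩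
  by_cases hLt : 0 < L t
  · have hmono : MonotoneOn g (Icc a t) := by
      refine monotoneOn_of_hasDerivWithinAt_nonneg (f' := g') (convex_Icc a t)
        (hg.mono (Icc_subset_Icc_right ht.2)) ?_ ?_ <;> rw [interior_Icc]
      · exact fun x hx => (hg' x ⟨hx.1, hx.2.trans_le ht.2⟩).hasDerivWithinAt
      · refine fun x hx => hpos x ⟨hx.1, hx.2.trans_le ht.2⟩ ?_
        by_contra! hLx
        exact hLt.not_ge (hsub x ⟨hx.1, hx.2.le.trans ht.2⟩ hLx ⟨hx.2.le, ht.2⟩).2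
    exact (min_le_left _ _).trans (hmono (left_mem_Icc.2 hat.le) (right_mem_Icc.2 hat.le) hat.le)
  · rw [not_lt] at hLt
    have hanti : AntitoneOn g (Icc t b) := by
      refine antitoneOn_of_hasDerivWithinAt_nonpos (f' := g') (convex_Icc t b)
        (hg.mono (Icc_subset_Icc_left ht.1)) ?_ ?_ <;> rw [interior_Icc]
      · exact fun x hx => (hg' x ⟨ht.1.trans_lt hx.1, hx.2⟩).hasDerivWithinAt
      · exact fun x hx =>
          hneg x ⟨ht.1.trans_lt hx.1, hx.2⟩ (hsub t ⟨hat, ht.2⟩ hLt ⟨hx.1.le, hx.2.le⟩).2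
    exact (min_le_right _ _).trans (hanti (left_mem_Icc.2 ht.2) (right_mem_Icc.2 ht.2) ht.2)

lemma splitCost_min_le {Z α t : ℝ} (hα₀ : 0 ≤ α) (hα₁ : α ≤ 1) (ht : t ∈ Icc 0 Z) :
    min (splitCost Z α 0) (splitCost Z α (Z / 2)) ≤ splitCost Z α t := by
  have onLeftHalf : ∀ s ∈ Icc 0 (Z / 2), min (splitCost Z α 0) (splitCost Z α (Z / 2)) ≤
      splitCost Z α s := fun s hs =>
    min_le_of_hasDerivAt_of_quasiconvexOn (continuous_splitCost Z hα₀).continuousOn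
      (fun x hx => hasDerivAt_splitCost ⟨hx.1, by linarith [hx.1, hx.2]⟩)
      (convexOn_marginalGap Z hα₁).quasiconvexOn (marginalGap_half Z α)
      (fun _ _ hx => mul_nonneg hα₀ (sub_nonneg.2 (exp_le_exp.2 (sub_pos.1 hx).le)))
      (fun _ _ hx =>
        mul_nonpos_of_nonneg_of_nonpos hα₀ (sub_nonpos.2 (exp_le_exp.2 (sub_nonpos.1 hx))))
      hs
  rcases le_total t (Z / 2) with h | h
  · exact onLeftHalf t ⟨ht.1, h⟩
  · rw [← splitCost_sub Z α t]
    exact onLeftHalf (Z - t) ⟨by linarith [ht.2], by linarith⟩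

theorem stmt_12_general (Z α : ℝ) (hα : α ∈ Set.Ioo (0 : ℝ) 1) :
    IsMinOn (fun ρ : ℝ => ρ ^ α + (Real.exp Z / (1 + ρ) - 1) ^ α)
        (Set.Icc 0 (Real.exp Z - 1)) 0 ∨
      IsMinOn (fun ρ : ℝ => ρ ^ α + (Real.exp Z / (1 + ρ) - 1) ^ α)
        (Set.Icc 0 (Real.exp Z - 1)) (Real.exp Z - 1) ∨
      IsMinOn (fun ρ : ℝ => ρ ^ α + (Real.exp Z / (1 + ρ) - 1) ^ α)
        (Set.Icc 0 (Real.exp Z - 1)) (Real.exp (Z / 2) - 1) := by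
  set F := fun ρ : ℝ => ρ ^ α + (exp Z / (1 + ρ) - 1) ^ α
  have hF : ∀ {ρ}, -1 < ρ → F ρ = splitCost Z α (log (1 + ρ)) :=
    fun hρ => (splitCost_log_one_add Z α hρ).symm
  have hmin : ∀ ρ ∈ Icc 0 (exp Z - 1), min (F 0) (F (exp (Z / 2) - 1)) ≤ F ρ := by
    intro ρ hρ
    rw [hF (ρ := 0) (by norm_num), hF (ρ := ρ) (by linarith [hρ.1]),
      hF (ρ := exp (Z / 2) - 1) (by linarith [exp_pos (Z / 2)]),
      add_zero, log_one, add_sub_cancel, log_exp]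
    exact splitCost_min_le hα.1.le hα.2.le ⟨log_nonneg (by linarith [hρ.1]),
      (log_le_iff_le_exp (by linarith [hρ.1])).2 (by linarith [hρ.2])⟩
  rcases le_total (F 0) (F (exp (Z / 2) - 1)) with h | h
  · exact Or.inl fun ρ hρ => (min_eq_left h).symm.trans_le (hmin ρ hρ)
  · exact Or.inr (Or.inr fun ρ hρ => (min_eq_right h).symm.trans_le (hmin ρ hρ))

theorem stmt_12 (Z α : ℝ) (hZ : 0 < Z) (hα : α ∈ Set.Ioo (0 : ℝ) 1) :
    IsMinOn (fun ρ : ℝ => ρ ^ α + (Real.exp Z / (1 + ρ) - 1) ^ α)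
        (Set.Icc 0 (Real.exp Z - 1)) 0 ∨
      IsMinOn (fun ρ : ℝ => ρ ^ α + (Real.exp Z / (1 + ρ) - 1) ^ α)
        (Set.Icc 0 (Real.exp Z - 1)) (Real.exp Z - 1) ∨
      IsMinOn (fun ρ : ℝ => ρ ^ α + (Real.exp Z / (1 + ρ) - 1) ^ α)
        (Set.Icc 0 (Real.exp Z - 1)) (Real.exp (Z / 2) - 1) :=
  stmt_12_general Z α hα
end

section
/- Let α ∈ (0,1], σ > 0, γ > 0, N ∈ ℕ. Any minimizer (p_0,…,p_{N−1}) of the cost (γ/N)·Σ p_n^α subject to p_n ≥ 0 and (1/N)·Σ log₂(1 + p_n/σ²) = R must assign equal power to all active slots: for all n, n', if p_n > 0 and p_{n'} > 0 then p_n = p_{n'}. -/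
/-!
Take two active slots with powers `a < b` and measure their rates in nats, `s = log (1 + a/σ²) < t`;
at unit noise power the power carrying rate `u` is `eᵘ - 1`. Keeping `s + t = c` fixed, the pair
costs `g u = (eᵘ - 1)^α + (e^(c-u) - 1)^α`, and `g' u` has the sign of `L u - L (c - u)`, where `L` is
the logarithm of the derivative of `(eᵘ - 1)^α`. Since `L'' = (1 - α) eᵘ / (eᵘ - 1)²` is decreasing,
`u ↦ L u - L (c - u)` is strictly convex on `(0, c/2]` (linear if `α = 1`) and vanishes at `c/2`, so
once `g' ≤ 0` it stays negative up to `c/2`. Hence at every interior point `g` lies strictly above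
`min (g 0) (g (c/2))`: putting the whole rate on one slot or splitting it evenly is strictly cheaper,
contradicting optimality.
-/

open Finset Real

theorem min_lt_of_deriv_nonpos_imp_neg {f f' : ℝ → ℝ} {a b s : ℝ}
    (hf : ContinuousOn f (Set.Icc a b)) (hf' : ∀ x ∈ Set.Ioo a b, HasDerivAt f (f' x) x)
    (hsign : ∀ x ∈ Set.Ioo a b, f' x ≤ 0 → ∀ y ∈ Set.Ioo x b, f' y < 0)
    (hs : s ∈ Set.Ioo a b) : min (f a) (f b) < f s := by
  by_cases h : ∃ x ∈ Set.Ioo a s, f' x ≤ 0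
  · obtain ⟨x, hx, hfx⟩ := h
    have hanti : StrictAntiOn f (Set.Icc s b) := by
      refine strictAntiOn_of_deriv_neg (convex_Icc s b)
        (hf.mono (Set.Icc_subset_Icc_left hs.1.le)) fun y hy => ?_
      rw [interior_Icc] at hy
      rw [(hf' y ⟨hs.1.trans hy.1, hy.2⟩).deriv]
      exact hsign x ⟨hx.1, hx.2.trans hs.2⟩ hfx y ⟨hx.2.trans hy.1, hy.2⟩
    exact min_lt_of_right_lt (hanti ⟨le_rfl, hs.2.le⟩ ⟨hs.2.le, le_rfl⟩ hs.2)
  · push Not at h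
    have hmono : StrictMonoOn f (Set.Icc a s) := by
      refine strictMonoOn_of_deriv_pos (convex_Icc a s)
        (hf.mono (Set.Icc_subset_Icc_right hs.2.le)) fun y hy => ?_
      rw [interior_Icc] at hy
      rw [(hf' y ⟨hy.1, hy.2.trans hs.2⟩).deriv]
      exact h y hy
    exact min_lt_of_left_lt (hmono ⟨le_rfl, hs.1.le⟩ ⟨hs.1.le, le_rfl⟩ hs.1)

theorem StrictConvexOn.neg_of_nonpos_of_eq_zero {f : ℝ → ℝ} {a b x y : ℝ}
    (hf : StrictConvexOn ℝ (Set.Ioc a b) f) (hb : f b = 0) (hx : x ∈ Set.Ioc a b)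
    (hfx : f x ≤ 0) (hxy : x < y) (hyb : y < b) : f y < 0 := by
  have h := hf.lt_on_openSegment hx (Set.right_mem_Ioc.2 (hx.1.trans_le hx.2))
    (hxy.trans hyb).ne (by rw [openSegment_eq_Ioo (hxy.trans hyb)]; exact ⟨hxy, hyb⟩)
  rwa [hb, max_eq_right hfx] at h

theorem sum_comp_update_update_add {ι β M : Type*} [Fintype ι] [DecidableEq ι]
    [AddCommMonoid M] (f : ι → β) (φ : β → M) {i j : ι} (hij : i ≠ j) (a b : β) :
    ∑ k, φ (Function.update (Function.update f i a) j b k) + (φ (f i) + φ (f j)) =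
      ∑ k, φ (f k) + (φ a + φ b) := by
  rw [← sum_sdiff (subset_univ {i, j}), ← sum_sdiff (subset_univ {i, j}) (f := fun k => φ (f k)),
    sum_pair hij, sum_pair hij, Function.update_self, Function.update_of_ne hij,
    Function.update_self]
  have hoff : ∀ k ∈ univ \ {i, j}, φ (Function.update (Function.update f i a) j b k) = φ (f k) := by
    intro k hk
    simp only [mem_sdiff, mem_univ, mem_insert, mem_singleton, true_and, not_or] at hk
    rw [Function.update_of_ne hk.2, Function.update_of_ne hk.1]
  rw [sum_congr rfl hoff]
  abel

theorem HasDerivAt.add_comp_const_sub {f : ℝ → ℝ} {f₁ f₂ c u : ℝ} (h₁ : HasDerivAt f f₁ u)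
    (h₂ : HasDerivAt f f₂ (c - u)) : HasDerivAt (fun x => f x + f (c - x)) (f₁ - f₂) u :=
  (h₁.add (h₂.comp_const_sub c u)).congr_deriv (sub_eq_add_neg _ _).symm

theorem HasDerivAt.sub_comp_const_sub {f : ℝ → ℝ} {f₁ f₂ c u : ℝ} (h₁ : HasDerivAt f f₁ u)
    (h₂ : HasDerivAt f f₂ (c - u)) : HasDerivAt (fun x => f x - f (c - x)) (f₁ + f₂) u :=
  (h₁.sub (h₂.comp_const_sub c u)).congr_deriv (sub_neg_eq_add _ _)

theorem exp_sub_one_pos_s13 {u : ℝ} (hu : 0 < u) : 0 < exp u - 1 := by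
  linarith [add_one_lt_exp hu.ne']

theorem hasDerivAt_exp_div_exp_sub_one {u : ℝ} (hu : 0 < u) :
    HasDerivAt (fun v => exp v / (exp v - 1)) (-exp u / (exp u - 1) ^ 2) u := by
  have hne := (exp_sub_one_pos_s13 hu).ne'
  refine ((hasDerivAt_exp u).div ((hasDerivAt_exp u).sub_const 1) hne).congr_deriv ?_
  field_simp
  ring

theorem strictAntiOn_exp_div_sq_exp_sub_one :
    StrictAntiOn (fun v => exp v / (exp v - 1) ^ 2) (Set.Ioi 0) := by
  intro u hu v _ huv
  have ha : 1 < exp u := one_lt_exp_iff.2 hu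
  have hab : exp u < exp v := exp_lt_exp.2 huv
  rw [div_lt_div_iff₀ (by nlinarith) (by nlinarith)]
  -- `eᵛ (eᵘ - 1)² < eᵘ (eᵛ - 1)²` reduces to `(eᵛ - eᵘ) (eᵘ eᵛ - 1) > 0`
  nlinarith [mul_pos (sub_pos.2 hab) (show 0 < exp u * exp v - 1 by nlinarith)]

theorem strictAntiOn_exp_div_exp_sub_one_add_comp (c : ℝ) :
    StrictAntiOn (fun u => exp u / (exp u - 1) + exp (c - u) / (exp (c - u) - 1))
      (Set.Ioo 0 (c / 2)) := by
  have hderiv : ∀ u ∈ Set.Ioo 0 (c / 2), HasDerivAt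
      (fun u => exp u / (exp u - 1) + exp (c - u) / (exp (c - u) - 1))
      (-exp u / (exp u - 1) ^ 2 - -exp (c - u) / (exp (c - u) - 1) ^ 2) u := fun u hu =>
    (hasDerivAt_exp_div_exp_sub_one hu.1).add_comp_const_sub
      (hasDerivAt_exp_div_exp_sub_one (by linarith [hu.1, hu.2]))
  refine strictAntiOn_of_deriv_neg (convex_Ioo _ _)
    (fun u hu => (hderiv u hu).continuousAt.continuousWithinAt) fun u hu => ?_
  rw [interior_Ioo] at hu
  have := strictAntiOn_exp_div_sq_exp_sub_one (hu.1 : 0 < u)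
    (show 0 < c - u by linarith [hu.1, hu.2]) (by linarith [hu.2])
  rw [(hderiv u hu).deriv, neg_div, neg_div]
  linarith

/-- The cost `p ^ α`, in units of `σ2 ^ α`, of the power `p = σ2 (eᵘ - 1)` that carries rate `u`
nats per slot. -/
noncomputable def rateCost (α u : ℝ) : ℝ := (exp u - 1) ^ α

noncomputable def logDerivRateCost (α u : ℝ) : ℝ := log α + u + (α - 1) * log (exp u - 1)

section RateCost

variable {α : ℝ}

theorem continuous_rateCost (hα : 0 < α) : Continuous (rateCost α) :=
  (continuous_exp.sub continuous_const).rpow_const fun _ => Or.inr hα.le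

theorem rateCost_zero (hα : 0 < α) : rateCost α 0 = 0 := by
  rw [rateCost, exp_zero, sub_self, zero_rpow hα.ne']

theorem rateCost_log_one_add {x : ℝ} (hx : 0 < x) : rateCost α (log (1 + x)) = x ^ α := by
  rw [rateCost, exp_log (by linarith), add_sub_cancel_left]

theorem hasDerivAt_rateCost (hα : 0 < α) {u : ℝ} (hu : 0 < u) :
    HasDerivAt (rateCost α) (exp (logDerivRateCost α u)) u := by
  have hpos := exp_sub_one_pos_s13 hu
  refine (((hasDerivAt_exp u).sub_const 1).rpow_const (Or.inl hpos.ne')).congr_deriv ?_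
  rw [logDerivRateCost, exp_add, exp_add, exp_log hα, mul_comm (α - 1), exp_mul, exp_log hpos]
  ring

theorem hasDerivAt_logDerivRateCost {u : ℝ} (hu : 0 < u) :
    HasDerivAt (logDerivRateCost α) (1 + (α - 1) * (exp u / (exp u - 1))) u :=
  ((hasDerivAt_id' u).const_add (log α)).add
    ((((hasDerivAt_exp u).sub_const 1).log (exp_sub_one_pos_s13 hu).ne').const_mul (α - 1))

theorem strictConvexOn_logDerivRateCost_sub (hα : α < 1) (c : ℝ) :
    StrictConvexOn ℝ (Set.Ioc 0 (c / 2))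
      (fun u => logDerivRateCost α u - logDerivRateCost α (c - u)) := by
  have hderiv : ∀ u ∈ Set.Ioo 0 c,
      HasDerivAt (fun u => logDerivRateCost α u - logDerivRateCost α (c - u))
        (2 + (α - 1) * (exp u / (exp u - 1) + exp (c - u) / (exp (c - u) - 1))) u :=
    fun u hu => ((hasDerivAt_logDerivRateCost hu.1).sub_comp_const_sub
      (hasDerivAt_logDerivRateCost (sub_pos.2 hu.2))).congr_deriv (by ring)
  have hIoo : Set.Ioc 0 (c / 2) ⊆ Set.Ioo 0 c := fun u hu => ⟨hu.1, by linarith [hu.1, hu.2]⟩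
  refine StrictMonoOn.strictConvexOn_of_deriv (convex_Ioc _ _)
    (fun u hu => (hderiv u (hIoo hu)).continuousAt.continuousWithinAt) ?_
  rw [interior_Ioc]
  intro x hx y hy hxy
  rw [(hderiv x (hIoo (Set.Ioo_subset_Ioc_self hx))).deriv,
    (hderiv y (hIoo (Set.Ioo_subset_Ioc_self hy))).deriv]
  nlinarith [strictAntiOn_exp_div_exp_sub_one_add_comp c hx hy hxy]

theorem logDerivRateCost_sub_neg_of_nonpos (hα : α ≤ 1) {c x y : ℝ} (hx : x ∈ Set.Ioo 0 (c / 2))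
    (hxc : logDerivRateCost α x - logDerivRateCost α (c - x) ≤ 0) (hy : y ∈ Set.Ioo x (c / 2)) :
    logDerivRateCost α y - logDerivRateCost α (c - y) < 0 := by
  rcases hα.lt_or_eq with hα | rfl
  · exact (strictConvexOn_logDerivRateCost_sub hα c).neg_of_nonpos_of_eq_zero
      (by rw [sub_half, sub_self]) (Set.Ioo_subset_Ioc_self hx) hxc hy.1 hy.2
  · simp only [logDerivRateCost, log_one, sub_self, zero_mul]
    linarith [hy.2]

theorem min_rateCost_lt (hα0 : 0 < α) (hα1 : α ≤ 1) {s t : ℝ} (hs : 0 < s) (hst : s < t) :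
    min (rateCost α (s + t)) (2 * rateCost α ((s + t) / 2)) < rateCost α s + rateCost α t := by
  set c := s + t
  have hsc : s ∈ Set.Ioo 0 (c / 2) := ⟨hs, by linarith⟩
  have h := min_lt_of_deriv_nonpos_imp_neg (f := fun u => rateCost α u + rateCost α (c - u))
    (f' := fun u => exp (logDerivRateCost α u) - exp (logDerivRateCost α (c - u)))
    ((continuous_rateCost hα0).add
      ((continuous_rateCost hα0).comp (continuous_sub_left c))).continuousOn
    (fun u hu => (hasDerivAt_rateCost hα0 hu.1).add_comp_const_sub
      (hasDerivAt_rateCost hα0 (by linarith [hu.1, hu.2])))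
    (fun x hx hfx y hy => by
      rw [sub_nonpos, exp_le_exp, ← sub_nonpos] at hfx
      rw [sub_neg, exp_lt_exp, ← sub_neg]
      exact logDerivRateCost_sub_neg_of_nonpos hα1 hx hfx hy)
    hsc
  rwa [sub_zero, sub_half, rateCost_zero hα0, zero_add, ← two_mul,
    show c - s = t by simp [c]] at h

end RateCost

theorem exists_cheaper_pair_of_lt {α : ℝ} (hα0 : 0 < α) (hα1 : α ≤ 1) {a b : ℝ} (ha : 0 < a)
    (hab : a < b) : ∃ A B : ℝ, 0 ≤ A ∧ 0 ≤ B ∧ (1 + A) * (1 + B) = (1 + a) * (1 + b) ∧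
      A ^ α + B ^ α < a ^ α + b ^ α := by
  set s := log (1 + a)
  set t := log (1 + b)
  have hs : 0 < s := log_pos (by linarith)
  have hst : s < t := log_lt_log (by linarith) (by linarith)
  have hprod : exp (s + t) = (1 + a) * (1 + b) := by
    rw [exp_add, exp_log (by linarith), exp_log (by linarith)]
  have hcost := min_rateCost_lt hα0 hα1 hs hst
  rw [rateCost_log_one_add ha, rateCost_log_one_add (ha.trans hab)] at hcost
  rcases min_lt_iff.1 hcost with h | h
  · refine ⟨exp (s + t) - 1, 0, (exp_sub_one_pos_s13 (by linarith)).le, le_rfl, ?_, ?_⟩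
    · rw [← hprod]
      ring
    · rwa [zero_rpow hα0.ne', add_zero]
  · have hpos := (exp_sub_one_pos_s13 (show 0 < (s + t) / 2 by linarith)).le
    refine ⟨exp ((s + t) / 2) - 1, exp ((s + t) / 2) - 1, hpos, hpos, ?_, ?_⟩
    · rw [← hprod, add_sub_cancel, ← exp_add, add_halves]
    · rwa [← two_mul]

theorem exists_cheaper_pair {α σ2 a b : ℝ} (hα0 : 0 < α) (hα1 : α ≤ 1) (hσ : 0 < σ2)
    (ha : 0 < a) (hab : a < b) : ∃ A B : ℝ, 0 ≤ A ∧ 0 ≤ B ∧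
      (1 + A / σ2) * (1 + B / σ2) = (1 + a / σ2) * (1 + b / σ2) ∧
      A ^ α + B ^ α < a ^ α + b ^ α := by
  obtain ⟨A, B, hA, hB, hprod, hcost⟩ :=
    exists_cheaper_pair_of_lt hα0 hα1 (div_pos ha hσ) (div_lt_div_of_pos_right hab hσ)
  refine ⟨σ2 * A, σ2 * B, mul_nonneg hσ.le hA, mul_nonneg hσ.le hB, ?_, ?_⟩
  · rwa [mul_div_cancel_left₀ _ hσ.ne', mul_div_cancel_left₀ _ hσ.ne']
  · rw [div_rpow ha.le hσ.le, div_rpow (ha.trans hab).le hσ.le] at hcost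
    have hσα : 0 < σ2 ^ α := rpow_pos_of_pos hσ α
    calc (σ2 * A) ^ α + (σ2 * B) ^ α = σ2 ^ α * (A ^ α + B ^ α) := by
          rw [mul_rpow hσ.le hA, mul_rpow hσ.le hB, mul_add]
      _ < σ2 ^ α * (a ^ α / σ2 ^ α + b ^ α / σ2 ^ α) := mul_lt_mul_of_pos_left hcost hσα
      _ = a ^ α + b ^ α := by field_simp

theorem stmt_13 (α σ2 γ R : ℝ) (hα0 : 0 < α) (hα1 : α ≤ 1) (hσ : 0 < σ2) (hγ : 0 < γ)
    (N : ℕ) (hN : 0 < N) (p : Fin N → ℝ) (hp : ∀ n, 0 ≤ p n)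
    (hrate : (1 / (N : ℝ)) * ∑ n, Real.logb 2 (1 + p n / σ2) = R)
    (hopt : ∀ q : Fin N → ℝ, (∀ n, 0 ≤ q n) →
      (1 / (N : ℝ)) * ∑ n, Real.logb 2 (1 + q n / σ2) = R →
      (γ / (N : ℝ)) * ∑ n, (p n) ^ α ≤ (γ / (N : ℝ)) * ∑ n, (q n) ^ α) :
    ∀ n n' : Fin N, 0 < p n → 0 < p n' → p n = p n' := by
  intro n n' hn hn'
  wlog hlt : p n < p n' generalizing n n'
  · rcases (not_lt.1 hlt).lt_or_eq with h | h
    · exact (this n' n hn' hn h).symm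
    · exact h.symm
  have hnn' : n ≠ n' := fun h => hlt.ne (congrArg p h)
  obtain ⟨A, B, hA, hB, hprod, hcost⟩ := exists_cheaper_pair hα0 hα1 hσ hn hlt
  set q := Function.update (Function.update p n A) n' B
  have hq : ∀ k, 0 ≤ q k := fun k => by
    simp only [q, Function.update_apply]
    split_ifs
    exacts [hB, hA, hp k]
  have hne : ∀ x, 0 ≤ x → 1 + x / σ2 ≠ 0 := fun x hx =>
    (add_pos_of_pos_of_nonneg one_pos (div_nonneg hx hσ.le)).ne'
  have hrate_q : (1 / (N : ℝ)) * ∑ k, Real.logb 2 (1 + q k / σ2) = R := by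
    have h := sum_comp_update_update_add p (fun x => Real.logb 2 (1 + x / σ2)) hnn' A B
    rw [← Real.logb_mul (hne _ hn.le) (hne _ hn'.le), ← Real.logb_mul (hne A hA) (hne B hB),
      hprod, add_left_inj] at h
    rw [h, hrate]
  have hcheaper : ∑ k, q k ^ α < ∑ k, p k ^ α := by
    linarith [sum_comp_update_update_add p (· ^ α) hnn' A B]
  exact absurd (hopt q hq hrate_q) (not_le.2 (mul_lt_mul_of_pos_left hcheaper (by positivity)))
end

section
/- For α ∈ (0,1), the unique minimizer over y > 0 of g(y) = (e^y − 1)^α / y satisfies the first-order condition α·e^y·y = e^y − 1, whose solution is y = W(−α^{−1}·e^{−α^{−1}}) + α^{−1}, where W is the (principal branch of the) Lambert W function. -/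
/-!
Minimizing `g(y) = (e^y - 1)^α / y` is the same as minimizing `log g`, whose second derivative
`1 / y² - α e^y / (e^y - 1)²` is positive for `α ≤ 1` because
`(e^y - 1)² = 4 sinh²(y/2) e^y > y² e^y`. So `log g` is strictly convex on `(0, ∞)` and its unique
minimizer is its critical point, given by `α e^y y = e^y - 1`. Writing `β = α⁻¹`, this reads
`(y - β) e^(y - β) = -β e^(-β)`, so `y = W(-β e^(-β)) + β`; the principal branch gives `y > 0`
since `β > 1` (the other branch gives the spurious root `y = 0`).
-/

open Real Set

noncomputable def logObjective (α y : ℝ) : ℝ := α * log (exp y - 1) - log y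

noncomputable def logObjectiveDeriv (α y : ℝ) : ℝ := α * exp y / (exp y - 1) - y⁻¹

lemma exp_sub_one_pos_of_pos {y : ℝ} (hy : 0 < y) : 0 < exp y - 1 :=
  sub_pos.2 (one_lt_exp_iff.2 hy)

lemma sq_mul_exp_lt_sq_exp_sub_one {y : ℝ} (hy : 0 < y) : y ^ 2 * exp y < (exp y - 1) ^ 2 := by
  have hsinh : y / 2 < sinh (y / 2) := self_lt_sinh_iff.2 (by linarith)
  have hhalf : exp (y / 2) * exp (y / 2) = exp y := by rw [← exp_add]; ring_nf
  have hexp_sub : exp y - 1 = 2 * exp (y / 2) * sinh (y / 2) := by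
    rw [sinh_eq, exp_neg, ← hhalf]; field_simp
  have hlt : y * exp (y / 2) < exp y - 1 := by
    rw [hexp_sub]; nlinarith [exp_pos (y / 2)]
  calc y ^ 2 * exp y = (y * exp (y / 2)) ^ 2 := by rw [← hhalf]; ring
    _ < (exp y - 1) ^ 2 := pow_lt_pow_left₀ hlt (by positivity) two_ne_zero

lemma rpow_div_eq_exp_logObjective (α : ℝ) {y : ℝ} (hy : 0 < y) :
    (exp y - 1) ^ α / y = exp (logObjective α y) := by
  rw [rpow_def_of_pos (exp_sub_one_pos_of_pos hy), logObjective, exp_sub, exp_log hy, mul_comm]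

lemma isMinOn_rpow_div_iff {α a : ℝ} (ha : 0 < a) :
    IsMinOn (fun y : ℝ => (exp y - 1) ^ α / y) (Ioi 0) a ↔ IsMinOn (logObjective α) (Ioi 0) a := by
  simp only [isMinOn_iff]
  refine forall₂_congr fun y (hy : 0 < y) => ?_
  rw [rpow_div_eq_exp_logObjective α ha, rpow_div_eq_exp_logObjective α hy, exp_le_exp]

lemma hasDerivAt_logObjective (α : ℝ) {y : ℝ} (hy : 0 < y) :
    HasDerivAt (logObjective α) (logObjectiveDeriv α y) y := by
  have hexp := ((hasDerivAt_exp y).sub_const 1).log (exp_sub_one_pos_of_pos hy).ne'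
  exact ((hexp.const_mul α).sub (hasDerivAt_log hy.ne')).congr_deriv
    (by unfold logObjectiveDeriv; ring)

lemma hasDerivAt_logObjectiveDeriv (α : ℝ) {y : ℝ} (hy : 0 < y) :
    HasDerivAt (logObjectiveDeriv α) ((y ^ 2)⁻¹ - α * exp y / (exp y - 1) ^ 2) y := by
  have hne := (exp_sub_one_pos_of_pos hy).ne'
  have hquot := ((hasDerivAt_exp y).const_mul α).div ((hasDerivAt_exp y).sub_const 1) hne
  exact (hquot.sub (hasDerivAt_inv hy.ne')).congr_deriv (by field_simp; ring)

lemma strictMonoOn_logObjectiveDeriv {α : ℝ} (hα : α ≤ 1) :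
    StrictMonoOn (logObjectiveDeriv α) (Ioi 0) := by
  refine strictMonoOn_of_deriv_pos (convex_Ioi 0)
    (fun y hy => (hasDerivAt_logObjectiveDeriv α hy).continuousAt.continuousWithinAt) ?_
  intro y hy
  rw [interior_Ioi, mem_Ioi] at hy
  rw [(hasDerivAt_logObjectiveDeriv α hy).deriv, sub_pos,
    div_lt_iff₀ (pow_pos (exp_sub_one_pos_of_pos hy) 2), inv_mul_eq_div, lt_div_iff₀ (by positivity)]
  nlinarith [sq_mul_exp_lt_sq_exp_sub_one hy,
    mul_le_mul_of_nonneg_right hα (by positivity : 0 ≤ exp y * y ^ 2)]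

lemma strictConvexOn_logObjective {α : ℝ} (hα : α ≤ 1) :
    StrictConvexOn ℝ (Ioi 0) (logObjective α) := by
  refine StrictMonoOn.strictConvexOn_of_deriv (convex_Ioi 0)
    (fun y hy => (hasDerivAt_logObjective α hy).continuousAt.continuousWithinAt) ?_
  rw [interior_Ioi]
  exact (strictMonoOn_logObjectiveDeriv hα).congr
    fun y hy => ((hasDerivAt_logObjective α hy).deriv).symm

lemma isMinOn_logObjective {α y : ℝ} (hα : α ≤ 1) (hy : 0 < y)
    (hcrit : α * exp y * y = exp y - 1) : IsMinOn (logObjective α) (Ioi 0) y := by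
  refine (strictConvexOn_logObjective hα).convexOn.isMinOn_of_rightDeriv_eq_zero
    (by rwa [interior_Ioi]) ?_
  rw [((hasDerivAt_logObjective α hy).hasDerivWithinAt).derivWithin (uniqueDiffWithinAt_Ioi y),
    logObjectiveDeriv, sub_eq_zero, div_eq_iff (exp_sub_one_pos_of_pos hy).ne', ← hcrit]
  field_simp

lemma mul_exp_mul_eq_exp_sub_one_of_mul_exp_eq {α w : ℝ} (hα : α ≠ 0)
    (hw : w * exp w = -α⁻¹ * exp (-α⁻¹)) :
    α * exp (w + α⁻¹) * (w + α⁻¹) = exp (w + α⁻¹) - 1 := by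
  have hinv : α * α⁻¹ = 1 := mul_inv_cancel₀ hα
  have hexp : exp (-α⁻¹) * exp α⁻¹ = 1 := by rw [← exp_add]; simp
  rw [exp_add]
  linear_combination α * exp α⁻¹ * hw + (exp w - exp (-α⁻¹)) * exp α⁻¹ * hinv - hexp

theorem stmt_14 (α : ℝ) (hα : α ∈ Set.Ioo (0 : ℝ) 1) (W : ℝ → ℝ)
    (hW : ∀ z : ℝ, -Real.exp (-1) ≤ z → W z * Real.exp (W z) = z ∧ -1 ≤ W z) :
    (∃! y, y ∈ Set.Ioi (0 : ℝ) ∧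
        IsMinOn (fun y : ℝ => (Real.exp y - 1) ^ α / y) (Set.Ioi 0) y) ∧
      (W (-α⁻¹ * Real.exp (-α⁻¹)) + α⁻¹) ∈ Set.Ioi (0 : ℝ) ∧
      IsMinOn (fun y : ℝ => (Real.exp y - 1) ^ α / y) (Set.Ioi 0)
        (W (-α⁻¹ * Real.exp (-α⁻¹)) + α⁻¹) ∧
      α * Real.exp (W (-α⁻¹ * Real.exp (-α⁻¹)) + α⁻¹)
          * (W (-α⁻¹ * Real.exp (-α⁻¹)) + α⁻¹) =
        Real.exp (W (-α⁻¹ * Real.exp (-α⁻¹)) + α⁻¹) - 1 := by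
  obtain ⟨hα0, hα1⟩ := hα
  obtain ⟨hW_eq, hW_ge⟩ := hW (-α⁻¹ * exp (-α⁻¹)) <| by
    simpa only [neg_mul, neg_le_neg_iff] using mul_exp_neg_le_exp_neg_one α⁻¹
  set y₀ := W (-α⁻¹ * exp (-α⁻¹)) + α⁻¹
  have hy₀ : 0 < y₀ := by linarith [(one_lt_inv₀ hα0).2 hα1]
  have hcrit : α * exp y₀ * y₀ = exp y₀ - 1 :=
    mul_exp_mul_eq_exp_sub_one_of_mul_exp_eq hα0.ne' hW_eq
  have hmin : IsMinOn (logObjective α) (Ioi 0) y₀ := isMinOn_logObjective hα1.le hy₀ hcrit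
  have hmin' := (isMinOn_rpow_div_iff hy₀).2 hmin
  refine ⟨⟨y₀, ⟨hy₀, hmin'⟩, fun y ⟨hy, hminy⟩ => ?_⟩, hy₀, hmin', hcrit⟩
  exact (strictConvexOn_logObjective hα1.le).eq_of_isMinOn
    ((isMinOn_rpow_div_iff hy).1 hminy) hmin hy hy₀
end

section
/- Let P₀ ≥ P_sleep ≥ 0, γ ≥ 0 with γ + (P₀ − P_sleep) > 0, σ > 0, α ∈ (0,1]. The function f(x) = (P₀ − P_sleep + γσ^{2α}(2^x − 1)^α)/x is convex on (0, ∞). -/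
/-!
Write the function as `(P₀ - P_sleep) / x + γ σ^{2α} g(x)` with `g(x) = (e^{cx} - 1)^α / x`,
`c = log 2`. The first term is convex, and `g'' ≥ 0` is checked directly: with `s = cx` and
`t = e^s`, `x³ g''(x)` is `(t - 1)^{α-2}` times a quadratic in `α` which is nonnegative for
`α ≤ 1` as soon as `t ≥ 1 + s + s²/2`.
-/

open Real Set

lemma quadratic_nonneg_of_le_one_s15 {A B C α : ℝ} (hA : 0 < A) (hα : α ≤ 1)
    (h1 : 0 ≤ A - B + C) (h : 2 * A ≤ B ∨ B ^ 2 ≤ 4 * A * C) :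
    0 ≤ A * α ^ 2 - B * α + C := by
  rcases h with h | h
  · have : 0 ≤ B - A * (1 + α) := by nlinarith
    nlinarith [mul_nonneg (sub_nonneg.2 hα) this]
  · have : 0 ≤ 4 * A * (A * α ^ 2 - B * α + C) := by nlinarith [sq_nonneg (2 * A * α - B)]
    exact (mul_nonneg_iff_of_pos_left (by positivity)).1 this

lemma quadratic_nonneg_of_taylor_le {s t α : ℝ} (hs : 0 < s) (hα : α ≤ 1)
    (ht : 1 + s + s ^ 2 / 2 ≤ t) :
    0 ≤ s ^ 2 * t ^ 2 * α ^ 2 - (s ^ 2 * t + 2 * s * t * (t - 1)) * α + 2 * (t - 1) ^ 2 := by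
  have ht1 : 1 < t := by nlinarith
  have hst : 0 < s * t := by positivity
  refine quadratic_nonneg_of_le_one_s15 (by positivity) hα ?_ ?_
  · have : 2 ≤ t * (s ^ 2 - 2 * s + 2) := by
      nlinarith [mul_le_mul_of_nonneg_right ht (by nlinarith [sq_nonneg (s - 1)] :
        (0 : ℝ) ≤ s ^ 2 - 2 * s + 2), pow_nonneg hs.le 4]
    nlinarith [mul_nonneg (sub_nonneg.2 ht1.le) (sub_nonneg.2 this)]
  rcases le_or_gt (2 * s * t) (s + 2 * (t - 1)) with h | h
  · left
    nlinarith [mul_le_mul_of_nonneg_left h hst.le]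
  · right
    -- for `s < 1`, `h` bounds `t` above by `(2 - s) / (2 - 2s)`, which is compatible with `ht`
    -- only if `s + s² > 1`
    have hs_large : 1 < s + s ^ 2 := by
      rcases le_or_gt 1 s with hs1 | hs1
      · nlinarith
      · nlinarith [mul_le_mul_of_nonneg_left ht (by linarith : (0 : ℝ) ≤ 2 * (1 - s))]
    have : (s + 2 * (t - 1)) ^ 2 ≤ 8 * (t - 1) ^ 2 := by
      nlinarith [sq_nonneg (2 * (t - 1) - s), mul_le_mul_of_nonneg_left ht hs.le]
    nlinarith [mul_le_mul_of_nonneg_left this (sq_nonneg (s * t))]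

lemma convexOn_Ioi_div_id_of_hasDerivAt2 {u u' u'' : ℝ → ℝ}
    (hu : ∀ x, 0 < x → HasDerivAt u (u' x) x) (hu' : ∀ x, 0 < x → HasDerivAt u' (u'' x) x)
    (hnum : ∀ x, 0 < x → 0 ≤ u'' x * x ^ 2 - 2 * u' x * x + 2 * u x) :
    ConvexOn ℝ (Ioi 0) fun x => u x / x := by
  have hf : ∀ x, 0 < x → HasDerivAt (fun x => u x / x) ((u' x * x - u x) / x ^ 2) x :=
    fun x hx => ((hu x hx).div (hasDerivAt_id x) hx.ne').congr_deriv (by simp)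
  have hf' : ∀ x, 0 < x → HasDerivAt (fun x => (u' x * x - u x) / x ^ 2)
      ((u'' x * x ^ 2 - 2 * u' x * x + 2 * u x) / x ^ 3) x := fun x hx => by
    refine ((((hu' x hx).mul (hasDerivAt_id x)).sub (hu x hx)).div (hasDerivAt_pow 2 x)
      (pow_ne_zero 2 hx.ne')).congr_deriv ?_
    simp only [Pi.sub_apply, Pi.mul_apply, id]
    field_simp
    ring
  exact convexOn_of_hasDerivWithinAt2_nonneg (convex_Ioi 0)
    (fun x hx => (hf x hx).continuousAt.continuousWithinAt)
    (fun x hx => (hf x (interior_subset hx)).hasDerivWithinAt)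
    (fun x hx => (hf' x (interior_subset hx)).hasDerivWithinAt)
    (fun x hx => div_nonneg (hnum x (interior_subset hx)) (pow_nonneg (interior_subset hx).le 3))

lemma convexOn_exp_sub_one_rpow_div {c α : ℝ} (hc : 0 < c) (hα : α ≤ 1) :
    ConvexOn ℝ (Ioi 0) fun x => (exp (c * x) - 1) ^ α / x := by
  have hexp : ∀ x, HasDerivAt (fun x => exp (c * x)) (exp (c * x) * c) x := fun x => by
    simpa using ((hasDerivAt_id x).const_mul c).exp
  have hpos : ∀ x, 0 < x → 0 < exp (c * x) - 1 := fun x hx =>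
    sub_pos.2 (one_lt_exp_iff.2 (mul_pos hc hx))
  refine convexOn_Ioi_div_id_of_hasDerivAt2
    (u' := fun x => exp (c * x) * c * α * (exp (c * x) - 1) ^ (α - 1))
    (u'' := fun x => exp (c * x) * c * c * α * (exp (c * x) - 1) ^ (α - 1) +
      exp (c * x) * c * α * (exp (c * x) * c * (α - 1) * (exp (c * x) - 1) ^ (α - 1 - 1)))
    (fun x hx => ((hexp x).sub_const 1).rpow_const (Or.inl (hpos x hx).ne'))
    (fun x hx => (((hexp x).mul_const c).mul_const α).mul
      (((hexp x).sub_const 1).rpow_const (Or.inl (hpos x hx).ne'))) fun x hx => ?_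
  have hp := hpos x hx
  have hQ := quadratic_nonneg_of_taylor_le (mul_pos hc hx) hα
    (quadratic_le_exp_of_nonneg (mul_pos hc hx).le)
  set t := exp (c * x)
  set q := (t - 1) ^ (α - 1 - 1)
  have hq1 : (t - 1) ^ (α - 1) = q * (t - 1) := by
    rw [← rpow_add_one hp.ne', sub_add_cancel]
  have hq2 : (t - 1) ^ α = q * (t - 1) ^ 2 := by
    rw [← rpow_add_natCast hp.ne']
    congr 1
    push_cast
    ring
  rw [hq1, hq2]
  calc (0 : ℝ) ≤ q * ((c * x) ^ 2 * t ^ 2 * α ^ 2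
        - ((c * x) ^ 2 * t + 2 * (c * x) * t * (t - 1)) * α + 2 * (t - 1) ^ 2) :=
      mul_nonneg (rpow_nonneg hp.le _) hQ
    _ = _ := by ring

theorem stmt_15_general (P0 Psleep γ σ α : ℝ) (h1 : Psleep ≤ P0)
    (hγ : 0 ≤ γ) (hσ : 0 < σ) (hα1 : α ≤ 1) :
    ConvexOn ℝ (Set.Ioi (0 : ℝ))
      (fun x => (P0 - Psleep + γ * σ ^ (2 * α) * ((2 : ℝ) ^ x - 1) ^ α) / x) := by
  have hstatic := (convexOn_zpow (𝕜 := ℝ) (-1)).smul (sub_nonneg.2 h1)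
  have hload := (convexOn_exp_sub_one_rpow_div (log_pos one_lt_two) hα1).smul
    (mul_nonneg hγ (rpow_nonneg hσ.le (2 * α)))
  refine (hstatic.add hload).congr fun x _ => ?_
  simp only [Pi.add_apply, smul_eq_mul, zpow_neg_one, rpow_def_of_pos two_pos]
  ring

theorem stmt_15 (P0 Psleep γ σ α : ℝ) (h1 : Psleep ≤ P0) (h2 : 0 ≤ Psleep)
    (hγ : 0 ≤ γ) (hpos : 0 < γ + (P0 - Psleep)) (hσ : 0 < σ)
    (hα0 : 0 < α) (hα1 : α ≤ 1) :
    ConvexOn ℝ (Set.Ioi (0 : ℝ))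
      (fun x => (P0 - Psleep + γ * σ ^ (2 * α) * ((2 : ℝ) ^ x - 1) ^ α) / x) :=
  stmt_15_general P0 Psleep γ σ α h1 hγ hσ hα1
end

section
/- Let α ∈ (0,1], γ > 0, P₀ > 0, σ > 0, and 0 < R_a < R_max. The function F(x) = (P₀ + γσ^{2α}(2^x − 1)^α)/x is convex on (0, ∞), hence attains its minimum over the interval [R_a, R_max] at a unique point (or a closed subinterval), characterizing the spectral efficiency that maximizes energy efficiency. -/
open Real Set

lemma key_ineq {s : ℝ} (hs : 0 < s) : s ^ 2 * Real.exp s ≤ (Real.exp s - 1) ^ 2 := by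
  have h1 : s / 2 < Real.sinh (s / 2) := Real.self_lt_sinh_iff.mpr (by linarith)
  have h2 : Real.sinh (s / 2) = (Real.exp (s / 2) - Real.exp (-(s / 2))) / 2 := Real.sinh_eq _
  have hepos : 0 < Real.exp (s / 2) := Real.exp_pos _
  have h3 : Real.exp (s / 2) * s ≤ Real.exp s - 1 := by
    have : Real.exp (s / 2) * (Real.exp (s / 2) - Real.exp (-(s / 2))) = Real.exp s - 1 := by
      rw [mul_sub, ← Real.exp_add, ← Real.exp_add]
      norm_num
    nlinarith [hepos]
  have h4 : 0 ≤ Real.exp (s / 2) * s := by positivity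
  have h5 : (Real.exp (s / 2) * s) ^ 2 ≤ (Real.exp s - 1) ^ 2 := pow_le_pow_left₀ h4 h3 2
  have h6 : (Real.exp (s / 2) * s) ^ 2 = Real.exp s * s ^ 2 := by
    rw [mul_pow, sq, ← Real.exp_add, add_halves]
  nlinarith

lemma main_convex (c P0 α : ℝ) (hc : 0 < c) (hP0 : 0 < P0) (hα0 : 0 < α) (hα1 : α ≤ 1) :
    ConvexOn ℝ (Set.Ioi (0 : ℝ)) (fun x => (P0 + c * ((2 : ℝ) ^ x - 1) ^ α) / x) := by
  set L : ℝ := Real.log 2 with hLdef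
  have hL : 0 < L := Real.log_pos one_lt_two
  set f : ℝ → ℝ := fun x => (P0 + c * ((2 : ℝ) ^ x - 1) ^ α) / x with hfdef
  set f1 : ℝ → ℝ := fun x =>
    (c * ((2 : ℝ) ^ x * L * α * ((2 : ℝ) ^ x - 1) ^ (α - 1)) * x
      - (P0 + c * ((2 : ℝ) ^ x - 1) ^ α) * 1) / x ^ 2 with hf1def
  set G : ℝ → ℝ := fun x =>
    (2 * (P0 + c * ((2 : ℝ) ^ x - 1) ^ α) * ((2 : ℝ) ^ x - 1) ^ 2
      + c * ((2 : ℝ) ^ x - 1) ^ α *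
        (α * (α - 1) * ((2 : ℝ) ^ x) ^ 2 * (L * x) ^ 2
          + α * ((2 : ℝ) ^ x - 1) * (2 : ℝ) ^ x * (L * x) ^ 2
          - 2 * α * ((2 : ℝ) ^ x - 1) * (2 : ℝ) ^ x * (L * x)))
      / (x ^ 3 * ((2 : ℝ) ^ x - 1) ^ 2) with hGdef
  -- basic facts on Ioi 0
  have ha_pos : ∀ x : ℝ, (0:ℝ) < (2 : ℝ) ^ x := fun x => Real.rpow_pos_of_pos two_pos x
  have hu_pos : ∀ x ∈ Set.Ioi (0:ℝ), (0:ℝ) < (2 : ℝ) ^ x - 1 := by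
    intro x hx
    have : (1:ℝ) < (2:ℝ) ^ x :=
      (Real.one_lt_rpow_iff_of_pos two_pos).mpr (Or.inl ⟨one_lt_two, hx⟩)
    linarith
  have hA : ∀ x : ℝ, HasDerivAt (fun y : ℝ => (2 : ℝ) ^ y) ((2 : ℝ) ^ x * L) x :=
    fun x => (Real.hasStrictDerivAt_const_rpow two_pos x).hasDerivAt
  have hu : ∀ x : ℝ, HasDerivAt (fun y : ℝ => (2 : ℝ) ^ y - 1) ((2 : ℝ) ^ x * L) x :=
    fun x => (hA x).sub_const 1
  have huα : ∀ x ∈ Set.Ioi (0:ℝ), HasDerivAt (fun y : ℝ => ((2 : ℝ) ^ y - 1) ^ α)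
      ((2 : ℝ) ^ x * L * α * ((2 : ℝ) ^ x - 1) ^ (α - 1)) x :=
    fun x hx => (hu x).rpow_const (Or.inl (hu_pos x hx).ne')
  have hn : ∀ x ∈ Set.Ioi (0:ℝ), HasDerivAt (fun y : ℝ => P0 + c * ((2 : ℝ) ^ y - 1) ^ α)
      (c * ((2 : ℝ) ^ x * L * α * ((2 : ℝ) ^ x - 1) ^ (α - 1))) x :=
    fun x hx => ((huα x hx).const_mul c).const_add P0
  -- first derivative
  have hf : ∀ x ∈ Set.Ioi (0:ℝ), HasDerivAt f (f1 x) x := by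
    intro x hx
    have h := (hn x hx).fun_div (hasDerivAt_id x) (ne_of_gt hx)
    simpa [hf1def] using h
  -- second derivative
  have hf2 : ∀ x ∈ Set.Ioi (0:ℝ), HasDerivAt f1 (G x) x := by
    intro x hx
    have hune : ((2 : ℝ) ^ x - 1) ≠ 0 := (hu_pos x hx).ne'
    have hm : HasDerivAt (fun y : ℝ => (2 : ℝ) ^ y * L * α) ((2 : ℝ) ^ x * L * L * α) x :=
      ((hA x).mul_const L).mul_const α
    have huα1 : HasDerivAt (fun y : ℝ => ((2 : ℝ) ^ y - 1) ^ (α - 1))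
        ((2 : ℝ) ^ x * L * (α - 1) * ((2 : ℝ) ^ x - 1) ^ (α - 1 - 1)) x :=
      (hu x).rpow_const (Or.inl hune)
    have hnum : HasDerivAt
        (fun y : ℝ => c * ((2 : ℝ) ^ y * L * α * ((2 : ℝ) ^ y - 1) ^ (α - 1)) * y
          - (P0 + c * ((2 : ℝ) ^ y - 1) ^ α) * 1)
        ((c * ((2 : ℝ) ^ x * L * L * α * ((2 : ℝ) ^ x - 1) ^ (α - 1)
            + (2 : ℝ) ^ x * L * α * ((2 : ℝ) ^ x * L * (α - 1) * ((2 : ℝ) ^ x - 1) ^ (α - 1 - 1)))) * x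
          + c * ((2 : ℝ) ^ x * L * α * ((2 : ℝ) ^ x - 1) ^ (α - 1)) * 1
          - c * ((2 : ℝ) ^ x * L * α * ((2 : ℝ) ^ x - 1) ^ (α - 1)) * 1) x := by
      exact (((hm.mul huα1).const_mul c).mul (hasDerivAt_id x)).sub ((hn x hx).mul_const 1)
    have h := hnum.fun_div (hasDerivAt_pow 2 x) (pow_ne_zero 2 (ne_of_gt hx))
    refine h.congr_deriv ?_
    have e1 : ((2 : ℝ) ^ x - 1) ^ (α - 1)
        = ((2 : ℝ) ^ x - 1) ^ α / ((2 : ℝ) ^ x - 1) := by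
      rw [Real.rpow_sub (hu_pos x hx), Real.rpow_one]
    have e2 : ((2 : ℝ) ^ x - 1) ^ (α - 1 - 1)
        = ((2 : ℝ) ^ x - 1) ^ α / ((2 : ℝ) ^ x - 1) / ((2 : ℝ) ^ x - 1) := by
      rw [Real.rpow_sub (hu_pos x hx), Real.rpow_sub (hu_pos x hx), Real.rpow_one]
    rw [hGdef]
    simp only [e1, e2]
    have hxne : x ≠ 0 := ne_of_gt hx
    field_simp
    ring
  -- nonnegativity of G on Ioi 0
  have hG : ∀ x ∈ Set.Ioi (0:ℝ), 0 ≤ G x := by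
    intro x hx
    have hxpos : (0:ℝ) < x := hx
    have hu' := hu_pos x hx
    have ha' := ha_pos x
    have hApos : (0:ℝ) < ((2 : ℝ) ^ x - 1) ^ α := Real.rpow_pos_of_pos hu' α
    have hs : (0:ℝ) < L * x := by positivity
    have hexp : (2:ℝ) ^ x = Real.exp (L * x) := by
      rw [Real.rpow_def_of_pos two_pos]
    have hkey : (L * x) ^ 2 * (2:ℝ) ^ x ≤ ((2:ℝ) ^ x - 1) ^ 2 := by
      rw [hexp]; exact key_ineq hs
    rw [hGdef]
    apply div_nonneg _ (by positivity)
    set a := (2:ℝ) ^ x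
    set u := a - 1
    set A := u ^ α
    set s := L * x
    have hE : 0 ≤ α * (α - 1) * a ^ 2 * s ^ 2 + α * u * a * s ^ 2 - 2 * α * u * a * s
        + 2 * u ^ 2 := by
      have h1 : 0 ≤ (α * a * s - u) ^ 2 := sq_nonneg _
      have h2 : 0 ≤ (1 - α) * (a * s ^ 2) := by
        apply mul_nonneg (by linarith) (by positivity)
      have h3 : a * s ^ 2 ≤ u ^ 2 := by
        have := hkey; nlinarith
      have hid : α * (α - 1) * a ^ 2 * s ^ 2 + α * u * a * s ^ 2 - 2 * α * u * a * s + 2 * u ^ 2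
          = (α * a * s - u) ^ 2 + (1 - α) * (a * s ^ 2) + (u ^ 2 - a * s ^ 2) := by ring
      linarith [h1, h2, h3, hid.ge, hid.le]
    have hsplit : 2 * (P0 + c * A) * u ^ 2 +
        c * A * (α * (α - 1) * a ^ 2 * s ^ 2 + α * u * a * s ^ 2 - 2 * α * u * a * s)
        = 2 * P0 * u ^ 2 + c * A *
          (α * (α - 1) * a ^ 2 * s ^ 2 + α * u * a * s ^ 2 - 2 * α * u * a * s + 2 * u ^ 2) := by
      ring
    rw [hsplit]
    have := mul_nonneg (mul_nonneg hc.le hApos.le) hE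
    nlinarith [sq_nonneg u, mul_pos hP0 (mul_pos hu' hu')]
  -- assemble
  have hIoi : interior (Set.Ioi (0:ℝ)) = Set.Ioi 0 := interior_Ioi
  apply convexOn_of_deriv2_nonneg (convex_Ioi 0)
  · intro x hx
    exact ((hf x hx).differentiableAt.continuousAt).continuousWithinAt
  · rw [hIoi]
    exact fun x hx => (hf x hx).differentiableAt.differentiableWithinAt
  · rw [hIoi]
    intro x hx
    have heq : deriv f =ᶠ[nhds x] f1 :=
      Filter.eventuallyEq_of_mem (isOpen_Ioi.mem_nhds hx) (fun y hy => (hf y hy).deriv)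
    exact ((hf2 x hx).differentiableAt.congr_of_eventuallyEq heq).differentiableWithinAt
  · rw [hIoi]
    intro x hx
    have heq : deriv f =ᶠ[nhds x] f1 :=
      Filter.eventuallyEq_of_mem (isOpen_Ioi.mem_nhds hx) (fun y hy => (hf y hy).deriv)
    have : deriv (deriv f) x = deriv f1 x := heq.deriv_eq
    simp only [Function.iterate_succ, Function.iterate_zero, Function.comp_apply, id_eq]
    rw [this, (hf2 x hx).deriv]
    exact hG x hx

lemma argmin_convex {f : ℝ → ℝ} {s : Set ℝ} (hf : ConvexOn ℝ s f) :
    Convex ℝ {x | x ∈ s ∧ IsMinOn f s x} := by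
  intro x hx y hy a b ha hb hab
  have hz : a • x + b • y ∈ s := hf.1 hx.1 hy.1 ha hb hab
  refine ⟨hz, ?_⟩
  rw [isMinOn_iff]
  intro w hw
  have h1 := hf.2 hx.1 hy.1 ha hb hab
  have h2 := (isMinOn_iff.mp hx.2) w hw
  have h3 := (isMinOn_iff.mp hy.2) w hw
  have : a • f x + b • f y ≤ f w := by
    simp only [smul_eq_mul]
    calc a * f x + b * f y ≤ a * f w + b * f w :=
          add_le_add (mul_le_mul_of_nonneg_left h2 ha) (mul_le_mul_of_nonneg_left h3 hb)
      _ = f w := by rw [← add_mul, hab, one_mul]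
  exact le_trans h1 this

theorem stmt_19 (α γ P0 σ Ra Rmax : ℝ) (hα0 : 0 < α) (hα1 : α ≤ 1) (hγ : 0 < γ)
    (hP0 : 0 < P0) (hσ : 0 < σ) (hRa : 0 < Ra) (hRR : Ra < Rmax) :
    ConvexOn ℝ (Set.Ioi (0 : ℝ))
        (fun x => (P0 + γ * σ ^ (2 * α) * ((2 : ℝ) ^ x - 1) ^ α) / x) ∧
      (∃ x ∈ Set.Icc Ra Rmax,
        IsMinOn (fun x => (P0 + γ * σ ^ (2 * α) * ((2 : ℝ) ^ x - 1) ^ α) / x)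
          (Set.Icc Ra Rmax) x) ∧
      Convex ℝ {x | x ∈ Set.Icc Ra Rmax ∧
        IsMinOn (fun x => (P0 + γ * σ ^ (2 * α) * ((2 : ℝ) ^ x - 1) ^ α) / x)
          (Set.Icc Ra Rmax) x} := by
  have hc : 0 < γ * σ ^ (2 * α) := by positivity
  have hconv : ConvexOn ℝ (Set.Ioi (0 : ℝ))
      (fun x => (P0 + γ * σ ^ (2 * α) * ((2 : ℝ) ^ x - 1) ^ α) / x) :=
    main_convex (γ * σ ^ (2 * α)) P0 α hc hP0 hα0 hα1
  have hsub : Set.Icc Ra Rmax ⊆ Set.Ioi (0 : ℝ) := fun x hx => lt_of_lt_of_le hRa hx.1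
  have hconvIcc : ConvexOn ℝ (Set.Icc Ra Rmax)
      (fun x => (P0 + γ * σ ^ (2 * α) * ((2 : ℝ) ^ x - 1) ^ α) / x) :=
    hconv.subset hsub (convex_Icc _ _)
  -- continuity on Icc
  have hc2 : Continuous fun x : ℝ => (2 : ℝ) ^ x := by
    have h : Differentiable ℝ fun x : ℝ => (2 : ℝ) ^ x :=
      fun x => (Real.hasStrictDerivAt_const_rpow two_pos x).hasDerivAt.differentiableAt
    exact h.continuous
  have hcont : ContinuousOn
      (fun x => (P0 + γ * σ ^ (2 * α) * ((2 : ℝ) ^ x - 1) ^ α) / x) (Set.Icc Ra Rmax) := by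
    apply ContinuousOn.div
    · apply ContinuousOn.add continuousOn_const
      apply ContinuousOn.mul continuousOn_const
      apply ContinuousOn.rpow_const ((hc2.sub continuous_const).continuousOn)
      intro x hx
      left
      have : (1:ℝ) < (2:ℝ) ^ x :=
        (Real.one_lt_rpow_iff_of_pos two_pos).mpr (Or.inl ⟨one_lt_two, lt_of_lt_of_le hRa hx.1⟩)
      intro h; rw [Pi.sub_apply, sub_eq_zero] at h; linarith [h.symm]
    · exact continuousOn_id
    · intro x hx
      exact ne_of_gt (lt_of_lt_of_le hRa hx.1)
  have hne : (Set.Icc Ra Rmax).Nonempty := ⟨Ra, le_refl Ra, hRR.le⟩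
  exact ⟨hconv, isCompact_Icc.exists_isMinOn hne hcont, argmin_convex hconvIcc⟩
end
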